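/- Let λ be a nonempty partition of n and let b_2 be its removable box of largest content, so ct(b_2) = q − r where λ = (q^r, λ_{r+1}, …) with λ_r = q > λ_{r+1} (or λ has exactly r rows all equal to q). If m is an integer with m = (2/n)Σ_{b∈λ} ct(b) and m ≥ ct(b_2), then λ is a rectangle and m = q − r. -/

import Mathlib

/-!
Twice the content sum of `λ` is `∑ᵢ λᵢ (λᵢ - 1 - 2i)`. Subtracting `n (q - r) = ∑ᵢ λᵢ (q - r)`
row by row, the `r` rows of length `q` contribute `q ∑_{i<r} (r - 1 - 2i) = 0`, while every
shorter row `i ≥ r` contributes `λᵢ (λᵢ - 1 - 2i - q + r) < 0`. Hence `n m = 2 ∑ ct < n (q - r)`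
unless `λ` has no row shorter than `q`, and for the rectangle `q^r` one has `2 ∑ ct = n (q - r)`.
-/

/-- A partition given as a weakly decreasing list of positive integers. -/
def IsPartition (l : List ℕ) : Prop :=
  l.Pairwise (· ≥ ·) ∧ ∀ x ∈ l, 0 < x

/-- Sum of contents `y - x` over the boxes of the Young diagram of `l`
(boxes in row `x+1` are `(x+1, y+1)` for `y < l[x]`, content `y - x`). -/
def contentSum (l : List ℕ) : ℤ :=
  ∑ x ∈ Finset.range l.length, ∑ y ∈ Finset.range (l.getD x 0), ((y : ℤ) - (x : ℤ))

theorem List.sum_eq_sum_range_getD {M : Type*} [AddCommMonoid M] (l : List M) :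
    l.sum = ∑ i ∈ Finset.range l.length, l.getD i 0 := by
  induction l with
  | nil => simp
  | cons b t ih => simp [Finset.sum_range_succ', ih, add_comm]

theorem List.getElem_eq_iff_lt_count {α : Type*} [LinearOrder α] {l : List α} {a : α}
    (hl : l.Pairwise (· ≥ ·)) (ha : ∀ x ∈ l, x ≤ a) {i : ℕ} (hi : i < l.length) :
    l[i] = a ↔ i < l.count a := by
  induction l generalizing i with
  | nil => simp at hi
  | cons b t ih =>
    obtain ⟨hbt, ht⟩ := List.pairwise_cons.1 hl
    by_cases hb : b = a
    · subst hb
      cases i with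
      | zero => simp
      | succ j =>
        simp [ih ht (fun x hx => ha x (List.mem_cons_of_mem _ hx)) (by simpa using hi)]
    · have hba : b < a := lt_of_le_of_ne (ha b List.mem_cons_self) hb
      have hlt : ∀ x ∈ b :: t, x < a := by
        intro x hx
        rcases List.mem_cons.1 hx with rfl | hx
        exacts [hba, (hbt x hx).trans_lt hba]
      have hcount : (b :: t).count a = 0 :=
        List.count_eq_zero.2 fun hmem => lt_irrefl a (hlt a hmem)
      simp only [hcount, Nat.not_lt_zero, iff_false]
      exact (hlt _ (List.getElem_mem hi)).ne

theorem two_mul_sum_range_sub (a x : ℕ) :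
    2 * ∑ y ∈ Finset.range a, ((y : ℤ) - x) = a * ((a : ℤ) - 1 - 2 * x) := by
  induction a with
  | zero => simp
  | succ a ih =>
    rw [Finset.sum_range_succ]
    push_cast
    linear_combination ih

theorem sum_range_sub_one_sub_two_mul (r : ℕ) :
    ∑ x ∈ Finset.range r, ((r : ℤ) - 1 - 2 * x) = 0 := by
  have gauss := two_mul_sum_range_sub r 0
  simp only [Nat.cast_zero, sub_zero, mul_zero] at gauss
  rw [Finset.sum_sub_distrib, ← Finset.mul_sum, gauss]
  simp only [Finset.sum_const, Finset.card_range, nsmul_eq_mul]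
  ring

theorem two_mul_contentSum (l : List ℕ) :
    2 * contentSum l = ∑ i ∈ Finset.range l.length,
      (l.getD i 0 : ℤ) * ((l.getD i 0 : ℤ) - 1 - 2 * i) := by
  rw [contentSum, Finset.mul_sum]
  exact Finset.sum_congr rfl fun i _ => two_mul_sum_range_sub _ _

theorem two_mul_contentSum_replicate (k q : ℕ) :
    2 * contentSum (List.replicate k q) = (k * q : ℤ) * (q - k) := by
  calc 2 * contentSum (List.replicate k q)
      = ∑ i ∈ Finset.range k, (q : ℤ) * (((k : ℤ) - 1 - 2 * i) + (q - k)) := by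
        rw [two_mul_contentSum, List.length_replicate]
        refine Finset.sum_congr rfl fun i hi => ?_
        rw [List.getD_eq_getElem _ _ (by simpa using hi), List.getElem_replicate]
        ring
    _ = (k * q : ℤ) * (q - k) := by
        rw [← Finset.mul_sum, Finset.sum_add_distrib, sum_range_sub_one_sub_two_mul]
        simp only [zero_add, Finset.sum_const, Finset.card_range, nsmul_eq_mul]
        ring

theorem two_mul_contentSum_lt {l : List ℕ} {q : ℕ} (h : IsPartition l) (hq : ∀ x ∈ l, x ≤ q)
    (hlt : l.count q < l.length) :
    2 * contentSum l < l.sum * ((q : ℤ) - l.count q) := by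
  set r := l.count q
  have hrow : ∀ i (hi : i < l.length), l.getD i 0 = l[i] := fun i hi =>
    List.getD_eq_getElem l 0 hi
  rw [two_mul_contentSum, List.sum_eq_sum_range_getD, Nat.cast_sum, Finset.sum_mul, ← sub_neg,
    ← Finset.sum_sub_distrib, ← Finset.sum_range_add_sum_Ico _ hlt.le]
  have full_rows : ∑ i ∈ Finset.range r, ((l.getD i 0 : ℤ) * ((l.getD i 0 : ℤ) - 1 - 2 * i)
      - (l.getD i 0 : ℤ) * ((q : ℤ) - r)) = 0 := by
    rw [← mul_zero (q : ℤ), ← sum_range_sub_one_sub_two_mul r, Finset.mul_sum]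
    refine Finset.sum_congr rfl fun i hi => ?_
    have hi : i < r := Finset.mem_range.1 hi
    rw [hrow i (hi.trans hlt), (List.getElem_eq_iff_lt_count h.1 hq _).2 hi]
    ring
  have short_rows : ∑ i ∈ Finset.Ico r l.length, ((l.getD i 0 : ℤ) * ((l.getD i 0 : ℤ) - 1 - 2 * i)
      - (l.getD i 0 : ℤ) * ((q : ℤ) - r)) < 0 := by
    refine Finset.sum_neg (fun i hi => ?_) (Finset.nonempty_Ico.2 hlt)
    obtain ⟨hri, hik⟩ := Finset.mem_Ico.1 hi
    have hpos : 1 ≤ l.getD i 0 := hrow i hik ▸ h.2 _ (List.getElem_mem hik)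
    have hshort : l.getD i 0 + 1 ≤ q := hrow i hik ▸ lt_of_le_of_ne (hq _ (List.getElem_mem hik))
      (mt (List.getElem_eq_iff_lt_count h.1 hq hik).1 (not_lt.2 hri))
    have : (r : ℤ) ≤ i := by exact_mod_cast hri
    have : (1 : ℤ) ≤ l.getD i 0 := by exact_mod_cast hpos
    have : (l.getD i 0 : ℤ) + 1 ≤ q := by exact_mod_cast hshort
    nlinarith
  linarith

/-- If m = (2/n)Σ ct(b) is an integer with m ≥ ct(b₂) = q - r (q the largest part, r the
number of parts equal to q), then λ is a rectangle and m = q - #rows. -/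
theorem stmt15 (l : List ℕ) (h : IsPartition l) (hne : l ≠ []) (n : ℕ) (hn : l.sum = n)
    (m : ℤ) (hm : (m : ℚ) = 2 / (n : ℚ) * (contentSum l : ℚ))
    (hge : (l.head hne : ℤ) - (l.count (l.head hne) : ℤ) ≤ m) :
    (∀ x ∈ l, x = l.head hne) ∧ m = (l.head hne : ℤ) - (l.length : ℤ) := by
  obtain ⟨q, t, rfl⟩ := List.exists_cons_of_ne_nil hne
  simp only [List.head_cons] at hge ⊢
  have hq : ∀ x ∈ q :: t, x ≤ q := by
    simpa using fun x hx => List.rel_of_pairwise_cons h.1 hx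
  have hn0 : 0 < n := by
    rw [← hn, List.sum_cons]
    exact Nat.add_pos_left (h.2 q List.mem_cons_self) _
  have hmn : m * n = 2 * contentSum (q :: t) := by
    have : (m : ℚ) * n = 2 * contentSum (q :: t) := by rw [hm]; field_simp
    exact_mod_cast this
  have hcount : (q :: t).count q = (q :: t).length := by
    by_contra hlt
    have := two_mul_contentSum_lt h hq (List.count_le_length.lt_of_ne hlt)
    rw [hn] at this
    have : (n : ℤ) * (q - (q :: t).count q) ≤ n * m := by gcongr
    linarith
  have hall : ∀ x ∈ q :: t, x = q := fun x hx => (List.count_eq_length.1 hcount x hx).symm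
  have hrect : q :: t = List.replicate (q :: t).length q := List.eq_replicate_iff.2 ⟨rfl, hall⟩
  refine ⟨hall, ?_⟩
  rw [hrect, two_mul_contentSum_replicate] at hmn
  rw [hrect, List.sum_replicate, smul_eq_mul] at hn
  rw [← hn] at hmn hn0
  push_cast at hmn
  have hn0 : (0 : ℤ) < (q :: t).length * q := by exact_mod_cast hn0
  exact mul_right_cancel₀ hn0.ne' (hmn.trans (by ring))
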